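/- For the machine M constructed in Lemma 3.3 from a Σ⁰₂ prefix-free set Q (with canonical approximation (Q_s)): if a string σ belongs to Q, then for every infinite binary sequence X extending σ there exists a finite string ρ such that M(X) = ρ·0^ω; in particular M(X) is computable. -/

import Mathlib

open MeasureTheory Filter

/-- Cantor space: infinite binary sequences. -/
abbrev CSeq := ℕ → Bool
/-- Finite binary strings. -/
abbrev BStr := List Bool

/-- The prefix of `X` of length `n`. -/
def pref (X : CSeq) (n : ℕ) : BStr := (List.range n).map X

/-- The halting problem `∅'`. -/
def K0 : Set ℕ := {n | ((Denumerable.ofNat Nat.Partrec.Code n).eval n).Dom}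

/-- The characteristic sequence of the halting problem. -/
noncomputable def chiK : CSeq := fun n => @decide (n ∈ K0) (Classical.propDecidable _)

/-- `f` is Turing computable with oracle `Y`: some computable functional,
reading finite initial segments of `Y`, computes `f` (consistently). -/
def BitComputableIn {α : Type} [Primcodable α] (Y : CSeq) (f : ℕ → α) : Prop :=
  ∃ F : ℕ → BStr → Option α, Computable₂ F ∧
    ∀ n, (∃ k, (F n (pref Y k)).isSome) ∧ ∀ k a, F n (pref Y k) = some a → a = f n

/-- A set of strings is c.e. in (computably enumerable relative to) the oracle `Y`. -/
def CEIn (Y : CSeq) (S : Set BStr) : Prop :=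
  ∃ R : BStr → BStr → Bool, Computable₂ R ∧ ∀ σ, σ ∈ S ↔ ∃ k, R σ (pref Y k) = true

/-- A set of strings is Σ⁰₂ iff it is c.e. relative to the halting problem. -/
def SigmaTwo (S : Set BStr) : Prop := CEIn chiK S

/-- A set of strings is prefix-free if no element is a proper prefix of another. -/
def PrefixFree (S : Set BStr) : Prop := ∀ σ ∈ S, ∀ τ ∈ S, σ <+: τ → σ = τ

/-- Two strings are compatible if one is a prefix of the other. -/
def Compat (σ τ : BStr) : Prop := σ <+: τ ∨ τ <+: σ

/-- `⟦S⟧`: the set of sequences with a prefix in `S`. -/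
def cyl (S : Set BStr) : Set CSeq := {X | ∃ σ ∈ S, pref X σ.length = σ}

/-- The binary digits of (the fractional part of) a real number. -/
noncomputable def realDigits (x : ℝ) : CSeq := fun i =>
  @decide ((1:ℝ)/2 ≤ Int.fract (x * 2 ^ i)) (Classical.propDecidable _)

/-- The fair-coin (Lebesgue) measure on Cantor space, obtained as the pushforward
of Lebesgue measure on `[0,1)` under the binary expansion map. -/
noncomputable def μC : Measure CSeq :=
  Measure.map realDigits (volume.restrict (Set.Ico (0:ℝ) 1))

/-- A uniformly-c.e.-in-`Y` family of sets of strings. -/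
def UniformCEIn (Y : CSeq) (V : ℕ → Set BStr) : Prop :=
  ∃ R : ℕ → BStr → BStr → Bool, Computable (fun p : ℕ × BStr × BStr => R p.1 p.2.1 p.2.2) ∧
    ∀ i σ, σ ∈ V i ↔ ∃ k, R i σ (pref Y k) = true

/-- A Martin-Löf test relative to the oracle `Y`. -/
def MLTestIn (Y : CSeq) (V : ℕ → Set BStr) : Prop :=
  UniformCEIn Y V ∧ ∀ i, μC (cyl (V i)) ≤ (1/2 : ENNReal) ^ i

/-- `X` is Martin-Löf random relative to the oracle `Y`. -/
def MLRandomIn (Y X : CSeq) : Prop := ∀ V, MLTestIn Y V → ∃ i, X ∉ cyl (V i)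

/-- Plain Martin-Löf randomness (trivial oracle). -/
def MLRandom (X : CSeq) : Prop := MLRandomIn (fun _ => false) X

/-- 2-randomness: Martin-Löf randomness relative to the halting problem. -/
def TwoRandom (X : CSeq) : Prop := MLRandomIn chiK X

/-- A real is 2-random if its binary expansion is 2-random. -/
def TwoRandomReal (x : ℝ) : Prop := TwoRandom (realDigits x)

/-- A real is `0'`-left-c.e. if it is the limit of an increasing sequence of
rationals computable from the halting problem. -/
def ZJLeftCE (x : ℝ) : Prop :=
  ∃ q : ℕ → ℚ, BitComputableIn chiK q ∧ Monotone q ∧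
    Tendsto (fun n => (q n : ℝ)) atTop (nhds x)

/-- A real is `0'`-right-c.e. if it is the limit of a decreasing sequence of
rationals computable from the halting problem. -/
def ZJRightCE (x : ℝ) : Prop :=
  ∃ q : ℕ → ℚ, BitComputableIn chiK q ∧ Antitone q ∧
    Tendsto (fun n => (q n : ℝ)) atTop (nhds x)

/-- A monotone oracle Turing machine. -/
structure MonotoneMachine where
  eval : BStr → Option BStr
  comp : Computable eval
  mono : ∀ σ τ a b, σ <+: τ → eval σ = some a → eval τ = some b → a <+: b

/-- The output of `M` on oracle `X` is total (infinite). -/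
def TotalOn (M : MonotoneMachine) (X : CSeq) : Prop :=
  ∀ n, ∃ k a, M.eval (pref X k) = some a ∧ n < a.length

/-- The output sequence of `M` on oracle `X` (meaningful where defined). -/
noncomputable def evalSeq (M : MonotoneMachine) (X : CSeq) : CSeq := fun n =>
  @dite _ (∃ k a, M.eval (pref X k) = some a ∧ n < a.length) (Classical.propDecidable _)
    (fun h => h.choose_spec.choose.getD n false) (fun _ => false)

/-- Turing reducibility `A ≤_T Y` between binary sequences. -/
def TuringLE (A Y : CSeq) : Prop := BitComputableIn Y A


lemma pref_length' (X : CSeq) (k : ℕ) : (pref X k).length = k := by simp [pref]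

lemma pref_take' (X : CSeq) {k l : ℕ} (h : k ≤ l) : (pref X l).take k = pref X k := by
  simp [pref, ← List.map_take, List.take_range, Nat.min_eq_left h]

lemma pref_prefix' (X : CSeq) {k l : ℕ} (h : k ≤ l) : pref X k <+: pref X l := by
  rw [← pref_take' X h]; exact List.take_prefix _ _

lemma getD_of_prefix {l₁ l₂ : BStr} (h : l₁ <+: l₂) {n : ℕ} (hn : n < l₁.length)
    (d : Bool) : l₁.getD n d = l₂.getD n d := by
  obtain ⟨r, rfl⟩ := h
  rw [List.getD_eq_getElem _ _ hn,
    List.getD_eq_getElem _ _ (lt_of_lt_of_le hn (by simp)),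
    List.getElem_append_left hn]

lemma getD_append_replicate (ρ : BStr) (m n : ℕ) :
    (ρ ++ List.replicate m false).getD n false = ρ.getD n false := by
  rcases lt_or_ge n ρ.length with h | h
  · rw [List.getD_eq_getElem _ _ h,
      List.getD_eq_getElem _ _ (lt_of_lt_of_le h (by simp)),
      List.getElem_append_left h]
  · rw [List.getD_eq_default _ _ h]
    simp only [List.getD_eq_getElem?_getD, List.getElem?_append_right h,
      List.getElem?_replicate]
    split <;> rfl

/-- for the machine from Lemma 3.3 (built from a canonical Σ⁰₂
approximation `(Q_s)` of `Q`): if `σ ∈ Q` then on every `X` extending `σ` the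
output is total and of the form `ρ·0^ω`, hence computable. -/
theorem stmt19 (Q : Set BStr) (Qs : ℕ → Set BStr) (M : MonotoneMachine)
    (hQlen : ∀ s, ∀ σ ∈ Qs s, List.length σ < s)
    (hQin : ∀ σ ∈ Q, ∃ s₀, 0 < s₀ ∧ ∀ s ≥ s₀, σ ∈ Qs s)
    (hMtot : ∀ s (σ : BStr), σ.length = 2 ^ (s + 1) - 1 →
      ∃ a : BStr, M.eval σ = some a ∧ a.length = σ.length)
    (hMzero : ∀ s (σ τa : BStr), σ.length = 2 ^ (s + 1) - 1 →
      M.eval (σ.take (2 ^ s - 1)) = some τa → (∃ η ∈ Qs s, η <+: σ) →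
      M.eval σ = some (τa ++ List.replicate (2 ^ s) false)) :
    ∀ σ ∈ Q, ∀ X : CSeq, pref X σ.length = σ →
      TotalOn M X ∧ (∃ ρ : BStr, evalSeq M X = fun n => ρ.getD n false) ∧
        Computable (evalSeq M X) := by
  intro σ hσ X hX
  obtain ⟨s₀, hs₀pos, hs₀⟩ := hQin σ hσ
  obtain ⟨m, rfl⟩ : ∃ m, s₀ = m + 1 := ⟨s₀ - 1, by omega⟩
  have ha : ∀ s, ∃ a : BStr, M.eval (pref X (2 ^ (s + 1) - 1)) = some a ∧
      a.length = 2 ^ (s + 1) - 1 := by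
    intro s
    obtain ⟨a, h1, h2⟩ := hMtot s _ (pref_length' X _)
    exact ⟨a, h1, by rw [h2, pref_length']⟩
  choose a hae hal using ha
  have hσlen : σ.length < m + 1 := hQlen (m + 1) σ (hs₀ (m + 1) le_rfl)
  have hσpre : ∀ k, σ.length ≤ k → σ <+: pref X k := by
    intro k hk
    rw [← hX]; exact pref_prefix' X hk
  have key : ∀ t, a (m + t) = a m ++ List.replicate (2 ^ (m + t + 1) - 2 ^ (m + 1)) false := by
    intro t
    induction t with
    | zero => simp
    | succ t ih =>
      have hpow1 : (1:ℕ) ≤ 2 ^ (m + t + 1) := Nat.one_le_two_pow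
      have hpow2 : (1:ℕ) ≤ 2 ^ (m + t + 2) := Nat.one_le_two_pow
      have hlt : m + t + 2 < 2 ^ (m + t + 2) := Nat.lt_two_pow_self
      have hmono : (2:ℕ) ^ (m + 1) ≤ 2 ^ (m + t + 1) :=
        Nat.pow_le_pow_right (by norm_num) (by omega)
      have hlen2 : σ.length ≤ 2 ^ (m + t + 2) - 1 :=
        le_trans (by omega : σ.length ≤ m + t + 2) (Nat.le_pred_of_lt hlt)
      have hz := hMzero (m + t + 1) (pref X (2 ^ (m + t + 2) - 1)) (a (m + t))
        (pref_length' X _)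
        (by rw [pref_take' X (Nat.sub_le_sub_right (Nat.pow_le_pow_right (by norm_num) (by omega)) 1)]
            exact hae (m + t))
        ⟨σ, hs₀ (m + t + 1) (by omega), hσpre _ hlen2⟩
      have h2 := hae (m + t + 1)
      rw [show m + (t + 1) = m + t + 1 from by ring]
      rw [show (2:ℕ) ^ (m + t + 1 + 1) - 1 = 2 ^ (m + t + 2) - 1 from by ring_nf] at h2
      rw [h2] at hz
      have := Option.some.inj hz
      rw [this, ih, List.append_assoc, ← List.replicate_add]
      congr 2
      have : (2:ℕ) ^ (m + t + 2) = 2 ^ (m + t + 1) + 2 ^ (m + t + 1) := by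
        rw [pow_succ]; ring
      omega
  have htot : TotalOn M X := by
    intro n
    have hlt : n + 1 < 2 ^ (n + 1) := Nat.lt_two_pow_self
    exact ⟨2 ^ (n + 1) - 1, a n, hae n, by rw [hal]; omega⟩
  have hval : ∀ n, evalSeq M X n = (a m).getD n false := by
    intro n
    have hex : ∃ k b, M.eval (pref X k) = some b ∧ n < b.length := htot n
    have hb := hex.choose_spec.choose_spec
    set k := hex.choose with hk
    set b := hex.choose_spec.choose with hbdef
    unfold evalSeq
    rw [dif_pos hex]
    set t := n + k with ht
    have hlt : m + t + 1 < 2 ^ (m + t + 1) := Nat.lt_two_pow_self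
    have h1 : b <+: a (m + t) :=
      M.mono _ _ _ _ (pref_prefix' X (by omega)) hb.1 (hae (m + t))
    rw [getD_of_prefix h1 hb.2, key t, getD_append_replicate]
  refine ⟨htot, ⟨a m, funext hval⟩, ?_⟩
  have : evalSeq M X = fun n => (a m).getD n false := funext hval
  rw [this]
  exact Primrec.to_comp ((Primrec.list_getD false).comp (Primrec.const _) Primrec.id)
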